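/- arXiv:0806.1371 — 3 statements merged into one kernel-verified Lean document; each statement's English description precedes it below -/
import Mathlib

section
/- For every n ≥ 1, the map 𝒫 sending a seed s ∈ {0, 1, …, n!−1} to the permutation 𝒫(s) of {0, …, n−1} obtained by Lehmer-code decoding of the algorithm's factoradic output (f_{n−1}(s), f_{n−2}(s), …, f₀(s)) is a bijection from {0, …, n!−1} onto the set of all permutations of {0, …, n−1}. -/
/-- Auxiliary carry sequence of the unranking algorithm: `ddSeq n s i = d_{n+1-i}`,
so `ddSeq n s 0 = d_{n+1} = 0` and, downward for `k = n, …, 1`,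
`d_k = ⌊((⌊(s + d_{k+1}·(k+1)!)/k!⌋) mod (k+1)²)/(k+2)⌋`. -/
def ddSeq (n s : ℕ) : ℕ → ℕ
  | 0 => 0
  | i + 1 =>
      let k := n - i
      ((s + ddSeq n s i * (k + 1).factorial) / k.factorial % (k + 1) ^ 2) / (k + 2)

/-- The digit `f_{k-1}(s)` of the algorithm, written with `j = k - 1` (so `k = j + 1`):
`f_{k-1}(s) = (x_k − ⌊s/k!⌋ − d_k) mod k`, computed in `ℤ` and normalized to
`{0, …, k-1}`, where `x_k = ⌊(s mod k!)/(k−1)!⌋` and `d_k = ddSeq n s (n+1-k)`. -/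
def fDigit (n s j : ℕ) : ℕ :=
  let k := j + 1
  let x : ℤ := (s % k.factorial) / j.factorial
  let d : ℤ := ddSeq n s (n - j)
  ((x - (s / k.factorial : ℕ) - d) % (k : ℤ)).toNat

/-- Lehmer-code decoding: from the list of available elements and a code list,
repeatedly remove the element at the (0-based) index given by the next code digit
and output it. -/
def lehmerDecode : List ℕ → List ℕ → List ℕ
  | _, [] => []
  | avail, c :: cs => avail.getD c 0 :: lehmerDecode (avail.eraseIdx c) cs

/-- The list of images `(𝒫(s)(0), 𝒫(s)(1), …, 𝒫(s)(n−1))` of the permutation `𝒫(s)`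
of `{0, …, n−1}`, obtained by Lehmer-decoding the factoradic output
`(f_{n−1}(s), …, f₀(s))` of the algorithm. -/
def permList (n s : ℕ) : List ℕ :=
  lehmerDecode (List.range n) (((List.range n).reverse).map (fDigit n s))

/-- `σ` is the permutation `𝒫(s)` of `{0, …, n−1}` produced by the algorithm. -/
def IsUnrankPerm (n s : ℕ) (σ : Equiv.Perm (Fin n)) : Prop :=
  ∀ i : Fin n, (σ i : ℕ) = (permList n s).getD (i : ℕ) 0

/-! Reading the algorithm from `k = n` downwards, the pair `(⌊s/k!⌋, d_{k+1})` determines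
`d_k`, and then the digit `f_{k-1}(s)` determines `x_k = ⌊s/(k-1)!⌋ mod k`, because `x_k < k`;
this gives `⌊s/(k-1)!⌋ = k⌊s/k!⌋ + x_k`. Starting from `⌊s/n!⌋ = 0` and `d_{n+1} = 0`, the
digits therefore determine `⌊s/0!⌋ = s`. As `f_{k-1}(s) < k`, the digits form a Lehmer code, and
Lehmer decoding is injective on Lehmer codes and turns them into permutations of `(0, …, n-1)`.
So `𝒫` maps the `n!` seeds injectively into the `n!` permutations. -/

open Nat

def IsLehmerCode : List ℕ → ℕ → Prop
  | [], m => m = 0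
  | c :: cs, m => c < m ∧ IsLehmerCode cs (m - 1)

theorem isLehmerCode_map_reverse_range {f : ℕ → ℕ} :
    ∀ {n : ℕ}, (∀ j < n, f j ≤ j) → IsLehmerCode ((List.range n).reverse.map f) n
  | 0, _ => rfl
  | n + 1, hf => by
    rw [List.range_succ, List.reverse_append, List.reverse_singleton, List.singleton_append,
      List.map_cons]
    exact ⟨Nat.lt_succ_of_le (hf n n.lt_succ_self),
      isLehmerCode_map_reverse_range fun j hj => hf j (by omega)⟩

theorem lehmerDecode_cons {avail : List ℕ} {c : ℕ} (cs : List ℕ) (hc : c < avail.length) :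
    lehmerDecode avail (c :: cs) = avail[c] :: lehmerDecode (avail.eraseIdx c) cs := by
  rw [lehmerDecode, List.getD_eq_getElem _ _ hc]

theorem lehmerDecode_perm : ∀ {code avail : List ℕ}, IsLehmerCode code avail.length →
    (lehmerDecode avail code).Perm avail
  | [], avail, h => by
    rw [List.eq_nil_of_length_eq_zero h]
    exact .nil
  | c :: cs, avail, ⟨hc, hcs⟩ => by
    rw [lehmerDecode_cons cs hc]
    have hperm := lehmerDecode_perm (avail := avail.eraseIdx c)
      (by rwa [List.length_eraseIdx_of_lt hc])
    exact (hperm.cons _).trans (List.getElem_cons_eraseIdx_perm hc)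

theorem lehmerDecode_injective : ∀ {code₁ code₂ avail : List ℕ}, avail.Nodup →
    IsLehmerCode code₁ avail.length → IsLehmerCode code₂ avail.length →
    lehmerDecode avail code₁ = lehmerDecode avail code₂ → code₁ = code₂
  | [], [], _, _, _, _, _ => rfl
  | [], _ :: _, _, _, h₁, h₂, _ => absurd h₂.1 (by simp [show _ = 0 from h₁])
  | _ :: _, [], _, _, h₁, h₂, _ => absurd h₁.1 (by simp [show _ = 0 from h₂])
  | c₁ :: cs₁, c₂ :: cs₂, avail, hnd, ⟨hc₁, hcs₁⟩, ⟨hc₂, hcs₂⟩, h => by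
    rw [lehmerDecode_cons cs₁ hc₁, lehmerDecode_cons cs₂ hc₂, List.cons.injEq] at h
    obtain rfl : c₁ = c₂ := (hnd.getElem_inj_iff).mp h.1
    rw [← List.length_eraseIdx_of_lt hc₁] at hcs₁ hcs₂
    rw [lehmerDecode_injective ((avail.eraseIdx_sublist c₁).nodup hnd) hcs₁ hcs₂ h.2]

section PermOfPermRange

variable {n : ℕ} {l : List ℕ}

theorem lt_length_of_perm_range (h : l.Perm (List.range n)) (i : Fin n) :
    (i : ℕ) < l.length := by
  rw [h.length_eq, List.length_range]
  exact i.2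

noncomputable def permOfPermRange (h : l.Perm (List.range n)) : Equiv.Perm (Fin n) :=
  Equiv.ofBijective
    (fun i => ⟨l[i]'(lt_length_of_perm_range h i),
      List.mem_range.mp (h.subset (List.getElem_mem _))⟩)
    (Finite.injective_iff_bijective.mp fun _ _ hij =>
      Fin.ext ((h.nodup_iff.mpr List.nodup_range).getElem_inj_iff.mp (congrArg Fin.val hij)))

theorem permOfPermRange_apply (h : l.Perm (List.range n)) (i : Fin n) :
    (permOfPermRange h i : ℕ) = l[i]'(lt_length_of_perm_range h i) :=
  rfl

theorem eq_of_permOfPermRange_eq {l' : List ℕ} (h : l.Perm (List.range n))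
    (h' : l'.Perm (List.range n)) (heq : permOfPermRange h = permOfPermRange h') : l = l' := by
  refine List.ext_getElem (h.length_eq.trans h'.length_eq.symm) fun i hi hi' => ?_
  have hin : i < n := by simpa [h.length_eq] using hi
  exact congrArg (fun σ => (σ ⟨i, hin⟩ : ℕ)) heq

end PermOfPermRange

theorem fDigit_lt_succ (n s j : ℕ) : fDigit n s j < j + 1 :=
  (Int.toNat_lt' (by omega)).2 (Int.emod_lt_of_pos _ (by omega))

theorem ddSeq_succ (n s i : ℕ) : ddSeq n s (i + 1) =
    ((s / (n - i)! + ddSeq n s i * (n - i + 1)) % (n - i + 1) ^ 2) / (n - i + 2) := by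
  rw [ddSeq, factorial_succ, ← Nat.mul_assoc, Nat.add_mul_div_right _ _ (factorial_pos _)]

theorem natCast_fDigit (n s j : ℕ) : (fDigit n s j : ℤ) =
    ((s / j ! % (j + 1) : ℕ) - (s / (j + 1)! : ℕ) - ddSeq n s (n - j)) % (j + 1 : ℤ) := by
  have hx : s % (j + 1)! / j ! = s / j ! % (j + 1) := by
    rw [factorial_succ, Nat.mul_comm, Nat.mod_mul_right_div_self]
  rw [fDigit, Int.toNat_of_nonneg (Int.emod_nonneg _ (by omega)), ← hx]
  push_cast
  rfl

theorem eq_of_sub_emod_eq {m a b : ℕ} {c : ℤ} (ha : a < m) (hb : b < m)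
    (h : ((a : ℤ) - c) % m = ((b : ℤ) - c) % m) : a = b :=
  (Int.natCast_modEq_iff.mp (Int.ModEq.add_right_cancel' (-c) h)).eq_of_lt_of_lt ha hb

theorem div_factorial_eq_of_fDigit_eq {n s t k : ℕ} (hq : s / (k + 1)! = t / (k + 1)!)
    (hd : ddSeq n s (n - k) = ddSeq n t (n - k)) (hf : fDigit n s k = fDigit n t k) :
    s / k ! = t / k ! := by
  have hf' := congrArg (fun d : ℕ => (d : ℤ)) hf
  simp only [natCast_fDigit, hq, hd, sub_sub] at hf'
  have hx := eq_of_sub_emod_eq (mod_lt _ (by omega : 0 < k + 1)) (mod_lt _ (by omega)) hf'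
  have split (u : ℕ) : u / k ! = (k + 1) * (u / (k + 1)!) + u / k ! % (k + 1) := by
    rw [factorial_succ, Nat.mul_comm (k + 1) k !, ← Nat.div_div_eq_div_mul, Nat.div_add_mod]
  rw [split s, split t, hq, hx]

theorem eq_of_fDigit_eq {n s t : ℕ} (hs : s < n !) (ht : t < n !)
    (hf : ∀ j < n, fDigit n s j = fDigit n t j) : s = t := by
  -- `ddSeq n s (n - k)` is the carry `d_{k+1}`
  have key : ∀ k ≤ n, s / k ! = t / k ! ∧ ddSeq n s (n - k) = ddSeq n t (n - k) := by
    intro k hk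
    induction hk using Nat.decreasingInduction with
    | self => simp [Nat.div_eq_of_lt hs, Nat.div_eq_of_lt ht, ddSeq]
    | of_succ k hk ih =>
      obtain ⟨hq, hd⟩ := ih
      have hd' : ddSeq n s (n - k) = ddSeq n t (n - k) := by
        rw [show n - k = n - (k + 1) + 1 by omega, ddSeq_succ, ddSeq_succ,
          show n - (n - (k + 1)) = k + 1 by omega, hq, hd]
      exact ⟨div_factorial_eq_of_fDigit_eq hq hd' (hf k hk), hd'⟩
  simpa using (key 0 (Nat.zero_le n)).1

theorem isLehmerCode_digits (n s : ℕ) :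
    IsLehmerCode ((List.range n).reverse.map (fDigit n s)) (List.range n).length := by
  rw [List.length_range]
  exact isLehmerCode_map_reverse_range fun j _ => le_of_lt_succ (fDigit_lt_succ n s j)

theorem permList_perm (n s : ℕ) : (permList n s).Perm (List.range n) :=
  lehmerDecode_perm (isLehmerCode_digits n s)

theorem eq_of_permList_eq {n s t : ℕ} (hs : s < n !) (ht : t < n !)
    (h : permList n s = permList n t) : s = t := by
  have hdigits := List.map_inj_left.mp <|
    lehmerDecode_injective List.nodup_range (isLehmerCode_digits n s) (isLehmerCode_digits n t) h
  exact eq_of_fDigit_eq hs ht fun j hj => hdigits j (by simpa using hj)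

noncomputable def unrankPerm (n s : ℕ) : Equiv.Perm (Fin n) :=
  permOfPermRange (permList_perm n s)

theorem isUnrankPerm_iff {n s : ℕ} {σ : Equiv.Perm (Fin n)} :
    IsUnrankPerm n s σ ↔ σ = unrankPerm n s := by
  simp only [IsUnrankPerm, Equiv.ext_iff, Fin.ext_iff, unrankPerm, permOfPermRange_apply,
    List.getD_eq_getElem _ _ (lt_length_of_perm_range (permList_perm n s) _)]
  rfl

theorem unrank_bijective_general (n : ℕ) :
    (∀ s : ℕ, s < n.factorial → ∃ σ : Equiv.Perm (Fin n), IsUnrankPerm n s σ) ∧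
    (∀ σ : Equiv.Perm (Fin n), ∃! s : ℕ, s < n.factorial ∧ IsUnrankPerm n s σ) := by
  have hinj : Function.Injective fun s : Fin n ! => unrankPerm n s := fun s t h =>
    Fin.ext (eq_of_permList_eq s.2 t.2 (eq_of_permOfPermRange_eq _ _ h))
  have hbij := (Fintype.bijective_iff_injective_and_card _).mpr
    ⟨hinj, by rw [Fintype.card_perm, Fintype.card_fin, Fintype.card_fin]⟩
  refine ⟨fun s _ => ⟨unrankPerm n s, isUnrankPerm_iff.mpr rfl⟩, fun σ => ?_⟩
  obtain ⟨s, rfl⟩ := hbij.2 σ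
  refine ⟨s, ⟨s.2, isUnrankPerm_iff.mpr rfl⟩, fun t ⟨ht, hσ⟩ => ?_⟩
  exact congrArg Fin.val (hinj (isUnrankPerm_iff.mp hσ).symm : (⟨t, ht⟩ : Fin n !) = s)

/-- For every `n ≥ 1`, the map `𝒫` sending a seed `s ∈ {0, …, n!−1}` to
the permutation `𝒫(s)` of `{0, …, n−1}` is a bijection from `{0, …, n!−1}` onto the
set of all permutations of `{0, …, n−1}`: every seed yields a permutation, and every
permutation arises from exactly one seed. -/
theorem unrank_bijective (n : ℕ) (hn : 1 ≤ n) :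
    (∀ s : ℕ, s < n.factorial → ∃ σ : Equiv.Perm (Fin n), IsUnrankPerm n s σ) ∧
    (∀ σ : Equiv.Perm (Fin n), ∃! s : ℕ, s < n.factorial ∧ IsUnrankPerm n s σ) :=
  unrank_bijective_general n
end

section
/- The algorithm unranks permutations in transposition order: for every n ≥ 1 and every seed s with s + 1 < n!, the permutations 𝒫(s) and 𝒫(s+1) differ by exactly one transposition, i.e., the permutation 𝒫(s+1) ∘ 𝒫(s)⁻¹ is a transposition (a swap of two distinct points); equivalently d(𝒫(s), 𝒫(s+1)) = 1. -/
/-- The transposition distance `d(σ, τ)`: the minimum length of a list of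
transpositions whose product equals `τ ∘ σ⁻¹`. -/
noncomputable def transDist {n : ℕ} (σ τ : Equiv.Perm (Fin n)) : ℕ :=
  sInf {m | ∃ L : List (Equiv.Perm (Fin n)),
    (∀ x ∈ L, x.IsSwap) ∧ L.prod = τ * σ⁻¹ ∧ L.length = m}

open Nat Equiv

namespace Unrank

def IsLehmerCode : List ℕ → ℕ → Prop
  | [], _ => True
  | c :: C, m => c < m ∧ IsLehmerCode C (m - 1)

theorem length_lehmerDecode : ∀ B C : List ℕ, (lehmerDecode B C).length = C.length
  | _, [] => rfl
  | B, _ :: C => congrArg (· + 1) (length_lehmerDecode (B.eraseIdx _) C)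

theorem lehmerDecode_map (f : ℕ → ℕ) :
    ∀ (C B : List ℕ), IsLehmerCode C B.length →
      lehmerDecode (B.map f) C = (lehmerDecode B C).map f
  | [], _, _ => rfl
  | c :: C, B, ⟨hc, hC⟩ => by
      have hC' : IsLehmerCode C (B.eraseIdx c).length := by
        rwa [List.length_eraseIdx_of_lt hc]
      rw [lehmerDecode, lehmerDecode, List.map_cons, List.eraseIdx_map,
        lehmerDecode_map f C _ hC', List.getD_eq_getElem _ _ (by simpa using hc),
        List.getD_eq_getElem _ _ hc, List.getElem_map]

theorem map_swap_eq_self {α : Type*} [DecidableEq α] {v w : α} {L : List α} (hv : v ∉ L)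
    (hw : w ∉ L) : L.map (swap v w) = L :=
  (List.map_congr_left fun x hx ↦
    swap_apply_of_ne_of_ne (fun h : x = v ↦ hv (h ▸ hx)) (fun h : x = w ↦ hw (h ▸ hx))).trans
    (List.map_id' L)

/-- Decoding `C'` from `R ++ [z]` gives the same list as decoding `C` from `z :: R`: each digit
of `C'` picks the same element as the corresponding digit of `C`, until `z` is picked. -/
inductive RotateStep : ℕ → List ℕ → List ℕ → Prop
  | last (m : ℕ) (C : List ℕ) : IsLehmerCode C m → RotateStep (m + 1) (0 :: C) (m :: C)
  | cons (m c : ℕ) (C C' : List ℕ) :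
      c < m → RotateStep m C C' → RotateStep (m + 1) ((c + 1) :: C) (c :: C')

theorem RotateStep.isLehmerCode {m : ℕ} {C C' : List ℕ} (h : RotateStep m C C') :
    IsLehmerCode C m := by
  induction h with
  | last m C hC => exact ⟨m.succ_pos, hC⟩
  | cons m c C C' hc _ ih => exact ⟨by omega, ih⟩

theorem RotateStep.lehmerDecode_eq {m : ℕ} {C C' : List ℕ} (h : RotateStep m C C')
    (R : List ℕ) (z : ℕ) (hR : R.length + 1 = m) :
    lehmerDecode (R ++ [z]) C' = lehmerDecode (z :: R) C := by
  induction h generalizing R with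
  | last m C _ =>
      obtain rfl : R.length = m := by omega
      simp [lehmerDecode, List.eraseIdx_append_of_length_le]
  | cons m c C C' hc _ ih =>
      have hcR : c < R.length := by omega
      rw [lehmerDecode, lehmerDecode, List.getD_append _ _ _ _ hcR,
        List.eraseIdx_append_of_lt_length hcR, ih _ (by rw [List.length_eraseIdx_of_lt hcR]; omega)]
      rfl

/-- How the Lehmer code of `𝒫(s)` changes into that of `𝒫(s+1)`; each case composes the decoded
list with a transposition. -/
inductive SwapStep : ℕ → List ℕ → List ℕ → Prop
  | succ (m a : ℕ) (C : List ℕ) :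
      a < m → IsLehmerCode C m → SwapStep (m + 1) (a :: C) ((a + 1) :: C)
  | wrap (m : ℕ) (C C' : List ℕ) : RotateStep m C C' → SwapStep (m + 1) (m :: C) (0 :: C')
  | cons (m c : ℕ) (C C' : List ℕ) :
      c < m + 1 → SwapStep m C C' → SwapStep (m + 1) (c :: C) (c :: C')

theorem lehmerDecode_succ_head (P S C : List ℕ) (v w : ℕ) (hB : (P ++ v :: w :: S).Nodup)
    (hC : IsLehmerCode C (P.length + S.length + 1)) :
    lehmerDecode (P ++ v :: w :: S) ((P.length + 1) :: C) =
      (lehmerDecode (P ++ v :: w :: S) (P.length :: C)).map (swap v w) := by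
  simp only [List.nodup_append, List.nodup_cons] at hB
  have hP : P.map (swap v w) = P := map_swap_eq_self (by grind) (by grind)
  have hS : S.map (swap v w) = S := map_swap_eq_self (by grind) (by grind)
  have hswap : (P ++ w :: S).map (swap v w) = P ++ v :: S := by
    rw [List.map_append, List.map_cons, hP, hS, swap_apply_right]
  have hv : (P ++ v :: w :: S).getD P.length 0 = v := by simp
  have hw : (P ++ v :: w :: S).getD (P.length + 1) 0 = w := by simp
  have hev : (P ++ v :: w :: S).eraseIdx P.length = P ++ w :: S := by
    simp [List.eraseIdx_append_of_length_le]
  have hew : (P ++ v :: w :: S).eraseIdx (P.length + 1) = P ++ v :: S := by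
    simp [List.eraseIdx_append_of_length_le]
  rw [lehmerDecode, lehmerDecode, hv, hw, hev, hew, List.map_cons, swap_apply_left,
    ← lehmerDecode_map _ _ _ (by rwa [List.length_append, List.length_cons, ← add_assoc]), hswap]

theorem SwapStep.exists_swap {m : ℕ} {C C' : List ℕ} (h : SwapStep m C C')
    (B : List ℕ) (hB : B.length = m) (hnd : B.Nodup) :
    ∃ v ∈ B, ∃ w ∈ B, v ≠ w ∧ lehmerDecode B C' = (lehmerDecode B C).map (swap v w) := by
  induction h generalizing B with
  | succ m a C ha hC =>
      obtain ⟨P, v, w, S, rfl, rfl⟩ : ∃ P v w S, B = P ++ v :: w :: S ∧ P.length = a := by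
        refine ⟨B.take a, B[a], B[a + 1], B.drop (a + 2), ?_, by simp; omega⟩
        rw [← List.drop_eq_getElem_cons, ← List.drop_eq_getElem_cons, List.take_append_drop]
      have hvw : v ≠ w := by
        simp only [List.nodup_append, List.nodup_cons] at hnd; grind
      refine ⟨v, by simp, w, by simp, hvw, lehmerDecode_succ_head P S C v w hnd ?_⟩
      simp only [List.length_append, List.length_cons] at hB
      rwa [show P.length + S.length + 1 = m by omega]
  | wrap m C C' hrot =>
      obtain ⟨b, R, z, rfl⟩ : ∃ b R z, B = b :: (R ++ [z]) := by
        obtain _ | ⟨b, B'⟩ := B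
        · simp at hB
        obtain rfl | ⟨R, z, rfl⟩ := B'.eq_nil_or_concat'
        · cases hrot <;> simp at hB
        exact ⟨b, R, z, rfl⟩
      have hR : R.length + 1 = m := by simpa using hB
      simp only [List.nodup_cons, List.nodup_append, List.mem_append, List.mem_singleton] at hnd
      have hbz : b ≠ z := by grind
      have hrot' : (b :: R).map (swap b z) = z :: R := by
        rw [List.map_cons, swap_apply_left, map_swap_eq_self (by grind) (by grind)]
      refine ⟨b, by simp, z, by simp, hbz, ?_⟩
      subst hR
      have hz : (b :: (R ++ [z])).getD (R.length + 1) 0 = z := by simp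
      have he : (b :: (R ++ [z])).eraseIdx (R.length + 1) = b :: R := by
        simp [List.eraseIdx_append_of_length_le]
      rw [lehmerDecode, lehmerDecode, hz, he, List.getD_cons_zero, List.eraseIdx_cons_zero,
        hrot.lehmerDecode_eq R z rfl, ← hrot',
        lehmerDecode_map _ _ _ (by simpa using hrot.isLehmerCode), List.map_cons, swap_apply_right]
  | cons m c C C' hc _ ih =>
      have hcB : c < B.length := by omega
      obtain ⟨v, hv, w, hw, hvw, hdec⟩ :=
        ih (B.eraseIdx c) (by rw [List.length_eraseIdx_of_lt hcB]; omega)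
          (hnd.sublist (List.eraseIdx_sublist B c))
      have hBc : B[c] ∉ B.eraseIdx c := by
        rw [← hnd.erase_getElem c hcB]; exact hnd.not_mem_erase
      refine ⟨v, (List.eraseIdx_sublist B c).subset hv, w, (List.eraseIdx_sublist B c).subset hw,
        hvw, ?_⟩
      rw [lehmerDecode, lehmerDecode, hdec, List.map_cons, List.getD_eq_getElem _ _ hcB,
        swap_apply_of_ne_of_ne (ne_of_mem_of_not_mem hv hBc).symm
          (ne_of_mem_of_not_mem hw hBc).symm]

theorem mul_add_mod_sq {a T x : ℕ} (hx : x < a) : (a * T + x) % a ^ 2 = a * (T % a) + x := by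
  have ha : 0 < a := by omega
  rw [sq, Nat.mod_mul, Nat.mul_add_mod, Nat.mod_eq_of_lt hx, Nat.mul_add_div ha,
    Nat.div_eq_of_lt hx, add_zero, add_comm]

theorem mul_add_div_add_emod_modEq {m c x : ℕ} (hc : c ≤ m) (hx : x ≤ m) :
    ((((m + 1) * c + x) / (m + 2) : ℕ) : ℤ) + ((x : ℤ) - c) % (m + 1) ≡ x [ZMOD m] := by
  rcases le_or_gt c x with hcx | hxc
  · rw [Nat.div_eq_of_lt_le (k := c) (by nlinarith) (by nlinarith),
      Int.emod_eq_of_lt (by omega) (by omega)]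
    ring_nf; rfl
  · obtain ⟨c, rfl⟩ : ∃ c', c = c' + 1 := ⟨c - 1, by omega⟩
    rw [Nat.div_eq_of_lt_le (k := c) (by nlinarith) (by nlinarith),
      show (x : ℤ) - (c + 1 : ℕ) = x - (c + 1) + (m + 1) + (-1) * (m + 1) by push_cast; ring,
      Int.add_mul_emod_self_right, Int.emod_eq_of_lt (by omega) (by omega),
      show (c : ℤ) + ((x : ℤ) - (c + 1) + (m + 1)) = x + m by ring]
    exact Int.add_modEq_right

/-- `carry n u m` is the carry `d_m` and `carryQuot n u m` is `T_m = ⌊u/m!⌋ + d_m`. -/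
def carry (n u m : ℕ) : ℕ := ddSeq n u (n + 1 - m)

def carryQuot (n u m : ℕ) : ℕ := u / m ! + carry n u m

theorem carry_of_lt {n m : ℕ} (u : ℕ) (hm : n < m) : carry n u m = 0 := by
  rw [carry, Nat.sub_eq_zero_of_le hm, ddSeq]

theorem carry_of_le {n m : ℕ} (u : ℕ) (hm : m ≤ n) :
    carry n u m = ((u / m ! + carry n u (m + 1) * (m + 1)) % (m + 1) ^ 2) / (m + 2) := by
  rw [carry, show n + 1 - m = (n - m) + 1 by omega, ddSeq]
  simp only [show n - (n - m) = m by omega, carry, Nat.add_sub_add_right]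
  congr 3
  rw [Nat.factorial_succ, ← mul_assoc, Nat.add_mul_div_right _ _ (Nat.factorial_pos m)]

theorem fDigit_eq (n u j : ℕ) :
    (fDigit n u j : ℤ) = (((u / j ! : ℕ) : ℤ) - carryQuot n u (j + 1)) % (j + 1) := by
  have hx : ((u : ℤ) % ((j + 1) ! : ℕ)) / (j ! : ℕ) = ((u / j ! % (j + 1) : ℕ) : ℤ) := by
    rw [Nat.factorial_succ, mul_comm, ← Nat.mod_mul_right_div_self]; push_cast; rfl
  have hmod : ((u / j ! % (j + 1) : ℕ) : ℤ) ≡ (u / j ! : ℕ) [ZMOD j + 1] := by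
    exact_mod_cast Nat.mod_modEq _ _
  simp only [fDigit, carryQuot, carry, Nat.add_sub_add_right]
  rw [Int.toNat_of_nonneg (Int.emod_nonneg _ (by omega)), hx, Nat.cast_succ,
    ((hmod.sub_right _).sub_right _).eq]
  push_cast
  ring_nf

theorem fDigit_le (n u j : ℕ) : fDigit n u j ≤ j := by
  have h := fDigit_eq n u j
  have := Int.emod_lt_of_pos (((u / j ! : ℕ) : ℤ) - carryQuot n u (j + 1))
    (by omega : (0 : ℤ) < j + 1)
  omega

theorem fDigit_modEq (n u j : ℕ) :
    (fDigit n u j : ℤ) ≡ (u / j ! : ℕ) - carryQuot n u (j + 1) [ZMOD j + 1] := by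
  rw [fDigit_eq]; exact Int.mod_modEq _ _

theorem div_factorial_succ (u m : ℕ) : u / (m + 1)! = u / m ! / (m + 1) := by
  rw [Nat.factorial_succ, mul_comm, Nat.div_div_eq_div_mul]

/-- With `c = T_{m+1} mod (m+1)` and `x = ⌊u/m!⌋ mod (m+1)`, the recursion reads
`d_m = ⌊((m+1)c + x)/(m+2)⌋` and `f_m = (x - c) mod (m+1)`, so that `d_m + f_m ≡ x (mod m)`. -/
theorem carryQuot_modEq {n m : ℕ} (u : ℕ) (hm : m ≤ n) :
    (carryQuot n u m : ℤ) ≡ 2 * (u / m ! : ℕ) - (u / (m + 1)! : ℕ) - fDigit n u m [ZMOD m] := by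
  set T := carryQuot n u (m + 1)
  have hq := Nat.div_add_mod (u / m !) (m + 1)
  rw [← div_factorial_succ] at hq
  have hcarry : carry n u m = ((m + 1) * (T % (m + 1)) + u / m ! % (m + 1)) / (m + 2) := by
    rw [carry_of_le u hm, ← mul_add_mod_sq (Nat.mod_lt _ (by omega))]
    congr 2
    simp only [T, carryQuot]
    linarith
  have hdigit : (fDigit n u m : ℤ) =
      (((u / m ! % (m + 1) : ℕ) : ℤ) - (T % (m + 1) : ℕ)) % (m + 1) := by
    rw [fDigit_eq]
    refine Int.ModEq.eq (Int.ModEq.sub ?_ ?_) <;> push_cast <;> exact (Int.mod_modEq _ _).symm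
  have key := mul_add_div_add_emod_modEq (m := m) (c := T % (m + 1)) (x := u / m ! % (m + 1))
    (by have := Nat.mod_lt T (by omega : 0 < m + 1); omega)
    (by have := Nat.mod_lt (u / m !) (by omega : 0 < m + 1); omega)
  rw [← hcarry, ← hdigit] at key
  have hqZ : ((m : ℤ) + 1) * (u / (m + 1)! : ℕ) + (u / m ! % (m + 1) : ℕ) = (u / m ! : ℕ) := by
    exact_mod_cast hq
  obtain ⟨c, hc⟩ := Int.modEq_iff_dvd.1 key
  rw [carryQuot, Int.modEq_iff_dvd]
  exact ⟨c + (u / (m + 1)! : ℕ), by rw [Nat.cast_add]; linear_combination hc - hqZ⟩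

theorem carry_eq_of_div_eq {n u v : ℕ} (m : ℕ) (huv : u / m ! = v / m !) :
    carry n u m = carry n v m := by
  induction h : n + 1 - m generalizing m with
  | zero => rw [carry_of_lt u (by omega), carry_of_lt v (by omega)]
  | succ i ih =>
      rw [carry_of_le u (by omega), carry_of_le v (by omega), huv,
        ih (m + 1) (by rw [div_factorial_succ, div_factorial_succ, huv]) (by omega)]

theorem carryQuot_eq_of_div_eq {n u v m : ℕ} (huv : u / m ! = v / m !) :
    carryQuot n u m = carryQuot n v m := by
  rw [carryQuot, carryQuot, huv, carry_eq_of_div_eq m huv]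

def lehmerCode (n u m : ℕ) : List ℕ := ((List.range m).reverse).map (fDigit n u)

theorem lehmerCode_succ (n u m : ℕ) :
    lehmerCode n u (m + 1) = fDigit n u m :: lehmerCode n u m := by
  simp [lehmerCode, List.range_succ]

theorem isLehmerCode_lehmerCode (n u m : ℕ) : IsLehmerCode (lehmerCode n u m) m := by
  induction m with
  | zero => trivial
  | succ m ih => rw [lehmerCode_succ]; exact ⟨Nat.lt_succ_of_le (fDigit_le n u m), ih⟩

theorem eq_of_modEq_of_le {a b j : ℕ} (ha : a ≤ j) (hb : b ≤ j) (h : (a : ℤ) ≡ b [ZMOD j + 1]) :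
    a = b :=
  Nat.ModEq.eq_of_lt_of_lt (by exact_mod_cast h) (by omega) (by omega)

def carryQuotIncr (n s m : ℕ) : ℤ := carryQuot n (s + 1) m - carryQuot n s m

section Successor

variable {n s k : ℕ}

theorem succ_div_factorial_of_le (hdvd : k ! ∣ s + 1) {j : ℕ} (hj : j ≤ k) :
    (s + 1) / j ! = s / j ! + 1 :=
  Nat.succ_div_of_dvd ((Nat.factorial_dvd_factorial hj).trans hdvd)

theorem succ_div_factorial_of_lt (hnd : ¬(k + 1)! ∣ s + 1) {j : ℕ} (hj : k < j) :
    (s + 1) / j ! = s / j ! :=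
  Nat.succ_div_of_not_dvd fun h ↦ hnd ((Nat.factorial_dvd_factorial hj).trans h)

theorem carryQuotIncr_of_lt (hnd : ¬(k + 1)! ∣ s + 1) {m : ℕ} (hm : k < m) :
    carryQuotIncr n s m = 0 := by
  rw [carryQuotIncr, carryQuot_eq_of_div_eq (succ_div_factorial_of_lt hnd hm), sub_self]

theorem fDigit_succ_of_lt (hnd : ¬(k + 1)! ∣ s + 1) {j : ℕ} (hj : k < j) :
    fDigit n (s + 1) j = fDigit n s j := by
  have h := fDigit_eq n (s + 1) j
  rw [succ_div_factorial_of_lt hnd hj,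
    carryQuot_eq_of_div_eq (succ_div_factorial_of_lt hnd (Nat.lt_succ_of_lt hj))] at h
  exact_mod_cast h.trans (fDigit_eq n s j).symm

theorem fDigit_succ_modEq (hdvd : k ! ∣ s + 1) {j : ℕ} (hj : j ≤ k) :
    (fDigit n (s + 1) j : ℤ) ≡ fDigit n s j + 1 - carryQuotIncr n s (j + 1) [ZMOD j + 1] := by
  have h := fDigit_modEq n (s + 1) j
  rw [succ_div_factorial_of_le hdvd hj] at h
  calc (fDigit n (s + 1) j : ℤ)
      ≡ ((s / j ! + 1 : ℕ) : ℤ) - carryQuot n (s + 1) (j + 1) [ZMOD j + 1] := h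
    _ = ((s / j ! : ℕ) - carryQuot n s (j + 1)) + 1 - carryQuotIncr n s (j + 1) := by
        rw [carryQuotIncr, Nat.cast_succ]; ring
    _ ≡ fDigit n s j + 1 - carryQuotIncr n s (j + 1) [ZMOD j + 1] :=
        ((fDigit_modEq n s j).symm.add_right 1).sub_right _

theorem carryQuotIncr_modEq_of_lt (hdvd : k ! ∣ s + 1) {j : ℕ} (hj : j < k) (hjn : j ≤ n) :
    carryQuotIncr n s j ≡ 1 - (fDigit n (s + 1) j - fDigit n s j) [ZMOD j] := by
  have h := (carryQuot_modEq (s + 1) hjn).sub (carryQuot_modEq s hjn)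
  rw [succ_div_factorial_of_le hdvd hj.le, succ_div_factorial_of_le hdvd hj] at h
  calc carryQuotIncr n s _ ≡ _ [ZMOD _] := h
    _ = _ := by push_cast [Nat.cast_succ]; ring

theorem carryQuotIncr_modEq_of_eq (hdvd : k ! ∣ s + 1) (hnd : ¬(k + 1)! ∣ s + 1) (hkn : k ≤ n) :
    carryQuotIncr n s k ≡ 2 - (fDigit n (s + 1) k - fDigit n s k) [ZMOD k] := by
  have h := (carryQuot_modEq (s + 1) hkn).sub (carryQuot_modEq s hkn)
  rw [succ_div_factorial_of_le hdvd le_rfl, succ_div_factorial_of_lt hnd k.lt_succ_self] at h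
  calc carryQuotIncr n s _ ≡ _ [ZMOD _] := h
    _ = _ := by push_cast [Nat.cast_succ]; ring

/-- Downward from level `k`, the increment of `T_m` stays `≡ 2 (mod m)` while the digits of `s`
are positive, each of them decreasing by one, and becomes `≡ 1` at the first zero digit, below
which nothing changes. -/
theorem lehmerCode_succ_below (hdvd : k ! ∣ s + 1) (hkn : k ≤ n) {m : ℕ} (hm : 1 ≤ m)
    (hmk : m ≤ k) :
    (carryQuotIncr n s m ≡ 1 [ZMOD m] → lehmerCode n (s + 1) m = lehmerCode n s m) ∧
      (carryQuotIncr n s m ≡ 2 [ZMOD m] →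
        RotateStep m (lehmerCode n s m) (lehmerCode n (s + 1) m)) := by
  induction m, hm using Nat.le_induction with
  | base =>
      have h0 : ∀ u, lehmerCode n u 1 = [0] := fun u ↦ by
        rw [lehmerCode_succ, Nat.le_zero.1 (fDigit_le n u 0)]; rfl
      rw [h0, h0]
      exact ⟨fun _ ↦ rfl, fun _ ↦ RotateStep.last 0 [] trivial⟩
  | succ m hm ih =>
      obtain ⟨ih_eq, ih_rot⟩ := ih (by omega)
      have hf := fDigit_succ_modEq (n := n) hdvd (j := m) (by omega)
      have hincr := carryQuotIncr_modEq_of_lt (n := n) hdvd (j := m) (by omega) (by omega)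
      have hf_le := fDigit_le n s m
      have hf'_le := fDigit_le n (s + 1) m
      rw [lehmerCode_succ, lehmerCode_succ]
      constructor
      · intro h1
        have hfeq : fDigit n (s + 1) m = fDigit n s m := eq_of_modEq_of_le hf'_le hf_le <| calc
          _ ≡ fDigit n s m + 1 - carryQuotIncr n s (m + 1) [ZMOD m + 1] := hf
          _ ≡ fDigit n s m + 1 - 1 [ZMOD m + 1] := h1.sub_left _
          _ = fDigit n s m := by ring
        rw [hfeq, ih_eq (hincr.trans (by rw [hfeq, sub_self, sub_zero]))]
      · intro h2
        have hf2 : (fDigit n (s + 1) m : ℤ) ≡ fDigit n s m - 1 [ZMOD m + 1] := calc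
          _ ≡ fDigit n s m + 1 - carryQuotIncr n s (m + 1) [ZMOD m + 1] := hf
          _ ≡ fDigit n s m + 1 - 2 [ZMOD m + 1] := h2.sub_left _
          _ = fDigit n s m - 1 := by ring
        obtain h0 | ⟨a, ha⟩ : fDigit n s m = 0 ∨ ∃ a, fDigit n s m = a + 1 :=
          (fDigit n s m).eq_zero_or_eq_succ_pred.imp id fun h ↦ ⟨_, h⟩
        · have hfm : fDigit n (s + 1) m = m := eq_of_modEq_of_le hf'_le le_rfl <|
            hf2.trans (by rw [h0, Int.modEq_iff_dvd]; simp)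
          rw [h0, hfm, ih_eq (hincr.trans (by rw [h0, hfm, Int.modEq_iff_dvd]; simp))]
          exact RotateStep.last m _ (isLehmerCode_lehmerCode n s m)
        · have hfa : fDigit n (s + 1) m = a := eq_of_modEq_of_le hf'_le (by omega) <|
            hf2.trans (by rw [ha]; push_cast; ring_nf; rfl)
          rw [ha, hfa]
          exact RotateStep.cons m a _ _ (by omega)
            (ih_rot (hincr.trans (by rw [ha, hfa]; push_cast; ring_nf; rfl)))

theorem swapStep_lehmerCode_base (hdvd : k ! ∣ s + 1) (hnd : ¬(k + 1)! ∣ s + 1) (hk : 1 ≤ k)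
    (hkn : k ≤ n) :
    SwapStep (k + 1) (lehmerCode n s (k + 1)) (lehmerCode n (s + 1) (k + 1)) := by
  have hf := fDigit_succ_modEq (n := n) hdvd (le_refl k)
  rw [carryQuotIncr_of_lt hnd k.lt_succ_self, sub_zero] at hf
  have hincr := carryQuotIncr_modEq_of_eq hdvd hnd hkn
  obtain ⟨below_eq, below_rot⟩ := lehmerCode_succ_below hdvd hkn hk le_rfl
  have hf_le := fDigit_le n s k
  have hf'_le := fDigit_le n (s + 1) k
  rw [lehmerCode_succ, lehmerCode_succ]
  rcases hf_le.lt_or_eq with hlt | heq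
  · have hfeq : fDigit n (s + 1) k = fDigit n s k + 1 :=
      eq_of_modEq_of_le hf'_le hlt (by exact_mod_cast hf)
    rw [hfeq, below_eq (hincr.trans (by rw [hfeq]; push_cast; ring_nf; rfl))]
    exact SwapStep.succ k _ _ hlt (isLehmerCode_lehmerCode n s k)
  · have hf0 : fDigit n (s + 1) k = 0 := eq_of_modEq_of_le hf'_le (Nat.zero_le k) <|
      hf.trans (by rw [heq, Int.modEq_iff_dvd]; exact ⟨-1, by ring⟩)
    rw [hf0, heq]
    refine SwapStep.wrap k _ _ (below_rot (hincr.trans ?_))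
    rw [hf0, heq, Int.modEq_iff_dvd]
    exact ⟨-1, by ring⟩

theorem swapStep_lehmerCode (hdvd : k ! ∣ s + 1) (hnd : ¬(k + 1)! ∣ s + 1) (hk : 1 ≤ k)
    {m : ℕ} (hkm : k < m) (hmn : m ≤ n) :
    SwapStep m (lehmerCode n s m) (lehmerCode n (s + 1) m) := by
  induction m, hkm using Nat.le_induction with
  | base => exact swapStep_lehmerCode_base hdvd hnd hk (by omega)
  | succ m hkm ih =>
      rw [lehmerCode_succ, lehmerCode_succ, fDigit_succ_of_lt hnd hkm]
      exact SwapStep.cons m _ _ _ (Nat.lt_succ_of_le (fDigit_le n s m)) (ih (by omega))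

end Successor

theorem exists_factorial_dvd_not_dvd {N n : ℕ} (hN : 0 < N) (hNn : N < n !) :
    ∃ k, 1 ≤ k ∧ k < n ∧ k ! ∣ N ∧ ¬(k + 1)! ∣ N := by
  have hex : ∃ k, ¬(k + 1)! ∣ N := ⟨n, fun h ↦ by
    have := Nat.le_of_dvd hN h
    have := Nat.factorial_le (Nat.le_add_right n 1)
    omega⟩
  have hnd := Nat.find_spec hex
  have hk : 1 ≤ Nat.find hex := Nat.one_le_iff_ne_zero.2 fun h ↦ hnd (by simp [h])
  have hdvd : (Nat.find hex)! ∣ N := by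
    simpa [Nat.sub_add_cancel hk] using Nat.find_min hex (Nat.sub_one_lt_of_lt hk)
  refine ⟨Nat.find hex, hk, ?_, hdvd, hnd⟩
  by_contra! h
  have := Nat.le_of_dvd hN ((Nat.factorial_dvd_factorial h).trans hdvd)
  omega

theorem permList_succ_eq_map_swap {n s : ℕ} (hs : s + 1 < n !) :
    ∃ v < n, ∃ w < n, v ≠ w ∧ permList n (s + 1) = (permList n s).map (swap v w) := by
  obtain ⟨k, hk, hkn, hdvd, hnd⟩ := exists_factorial_dvd_not_dvd s.succ_pos hs
  obtain ⟨v, hv, w, hw, hvw, h⟩ := (swapStep_lehmerCode hdvd hnd hk hkn le_rfl).exists_swap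
    (List.range n) List.length_range List.nodup_range
  exact ⟨v, List.mem_range.1 hv, w, List.mem_range.1 hw, hvw, h⟩

theorem length_permList (n u : ℕ) : (permList n u).length = n := by
  simp [permList, length_lehmerDecode]

theorem eq_swap_mul_of_permList_eq {n u u' v w : ℕ} {σ τ : Perm (Fin n)}
    (hσ : IsUnrankPerm n u σ) (hτ : IsUnrankPerm n u' τ) (hv : v < n) (hw : w < n)
    (h : permList n u' = (permList n u).map (swap v w)) :
    τ = swap ⟨v, hv⟩ ⟨w, hw⟩ * σ := by
  ext i
  have hi : (i : ℕ) < (permList n u).length := (length_permList n u).symm ▸ i.isLt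
  rw [hτ i, h, Perm.mul_apply, List.getD_eq_getElem _ _ (by simpa using hi), List.getElem_map,
    ← List.getD_eq_getElem _ 0 hi, ← hσ i, Fin.val_injective.map_swap]

theorem transDist_eq_one {n : ℕ} {σ τ : Perm (Fin n)} (h : (τ * σ⁻¹).IsSwap) :
    transDist σ τ = 1 := by
  have h1 : 1 ∈ {m | ∃ L : List (Perm (Fin n)),
      (∀ x ∈ L, x.IsSwap) ∧ L.prod = τ * σ⁻¹ ∧ L.length = m} :=
    ⟨[τ * σ⁻¹], by simpa using h, List.prod_singleton, rfl⟩
  refine le_antisymm (Nat.sInf_le h1) (Nat.one_le_iff_ne_zero.2 fun h0 ↦ ?_)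
  obtain ⟨L, -, hL, hlen⟩ | hempty := Nat.sInf_eq_zero.1 h0
  · obtain ⟨x, y, hxy, hswap⟩ := h
    rw [List.length_eq_zero_iff.1 hlen, List.prod_nil, hswap] at hL
    exact hxy (swap_eq_one_iff.1 hL.symm)
  · exact (Set.eq_empty_iff_forall_notMem.1 hempty) 1 h1

end Unrank

open Unrank

theorem unrank_transposition_order_general (n : ℕ) (s : ℕ)
    (hs : s + 1 < n.factorial) (σ τ : Equiv.Perm (Fin n))
    (hσ : IsUnrankPerm n s σ) (hτ : IsUnrankPerm n (s + 1) τ) :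
    (τ * σ⁻¹).IsSwap ∧ transDist σ τ = 1 := by
  obtain ⟨v, hv, w, hw, hvw, hperm⟩ := permList_succ_eq_map_swap hs
  have hswap : (τ * σ⁻¹).IsSwap := ⟨⟨v, hv⟩, ⟨w, hw⟩, fun h ↦ hvw (congrArg Fin.val h), by
    rw [eq_swap_mul_of_permList_eq hσ hτ hv hw hperm, mul_inv_cancel_right]⟩
  exact ⟨hswap, transDist_eq_one hswap⟩

/-- The algorithm unranks permutations in transposition order: for every
`n ≥ 1` and every seed `s` with `s + 1 < n!`, the permutations `𝒫(s)` and `𝒫(s+1)`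
differ by exactly one transposition, i.e. `𝒫(s+1) ∘ 𝒫(s)⁻¹` is a transposition;
equivalently `d(𝒫(s), 𝒫(s+1)) = 1`. -/
theorem unrank_transposition_order (n : ℕ) (hn : 1 ≤ n) (s : ℕ)
    (hs : s + 1 < n.factorial) (σ τ : Equiv.Perm (Fin n))
    (hσ : IsUnrankPerm n s σ) (hτ : IsUnrankPerm n (s + 1) τ) :
    (τ * σ⁻¹).IsSwap ∧ transDist σ τ = 1 :=
  unrank_transposition_order_general n s hs σ τ hσ hτ
end

section
/- For every n ≥ 1, every k with 1 ≤ k ≤ n, and every seed s with s < k!, the permutation 𝒫(s) is at transposition distance at most k−1 from 𝒫(0): d(𝒫(s), 𝒫(0)) ≤ k − 1. -/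
/-!
If `s < k!`, every digit `f_j(s)` with `j ≥ k` vanishes, because all the quotients by
factorials `≥ k!` entering it (including the carries `d`) are zero. So the Lehmer code of
`𝒫(s)` starts with `n - k` zeros and `𝒫(s)` fixes `0, …, n - k - 1`, while `𝒫(0)` is the
identity. A permutation moving at most `k` points is a product of at most `k - 1`
transpositions: composing with `swap x (π x)` fixes one more point, and the last swap
fixes two.
-/

open Finset Nat

namespace Equiv.Perm

theorem exists_isSwap_list_prod_eq {α : Type*} [DecidableEq α] [Fintype α] (π : Perm α) :
    ∃ L : List (Perm α), (∀ g ∈ L, g.IsSwap) ∧ L.prod = π ∧ L.length ≤ #π.support - 1 := by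
  induction hm : #π.support using Nat.strong_induction_on generalizing π with
  | _ m ih =>
    rcases eq_or_ne π 1 with rfl | hπ
    · exact ⟨[], by simp, rfl, Nat.zero_le _⟩
    obtain ⟨x, hx⟩ : ∃ x, π x ≠ x := by
      by_contra! h
      exact hπ (Equiv.ext h)
    have hfewer := card_support_swap_mul hx
    obtain ⟨L, hL, hprod, hlen⟩ := ih _ (hm ▸ hfewer) (swap x (π x) * π) rfl
    have htwo := two_le_card_support_of_ne_one hπ
    refine ⟨swap x (π x) :: L, ?_, ?_, ?_⟩
    · exact List.forall_mem_cons.2 ⟨⟨x, π x, hx.symm, rfl⟩, hL⟩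
    · rw [List.prod_cons, hprod, ← mul_assoc, swap_mul_self, one_mul]
    · simp only [List.length_cons]
      omega

end Equiv.Perm

theorem transDist_le_card_support_sub_one {n : ℕ} (σ τ : Equiv.Perm (Fin n)) :
    transDist σ τ ≤ #(τ * σ⁻¹).support - 1 := by
  obtain ⟨L, hL, hprod, hlen⟩ := (τ * σ⁻¹).exists_isSwap_list_prod_eq
  refine le_trans (Nat.sInf_le ?_) hlen
  exact ⟨L, hL, hprod, rfl⟩


theorem ddSeq_eq_zero_of_lt_factorial {n s i : ℕ} (hs : s < (n + 1 - i)!) : ddSeq n s i = 0 := by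
  induction i with
  | zero => rfl
  | succ i ih =>
    have hs' : s < (n - i)! := by simpa using hs
    have hd : ddSeq n s i = 0 := ih (hs'.trans_le (factorial_le (by omega)))
    simp [ddSeq, hd, Nat.div_eq_of_lt hs']

theorem fDigit_eq_zero_of_lt_factorial {n s j : ℕ} (hs : s < j !) : fDigit n s j = 0 := by
  have hs' : s < (j + 1)! := hs.trans_le (factorial_le (le_succ j))
  have hd : ddSeq n s (n - j) = 0 := by
    rcases Nat.eq_zero_or_pos (n - j) with h | h
    · rw [h]; rfl
    · exact ddSeq_eq_zero_of_lt_factorial (hs'.trans_le (factorial_le (by omega)))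
  have hmod : (s : ℤ) % ((j + 1)! : ℤ) = s := Int.emod_eq_of_lt (by positivity) (by exact_mod_cast hs')
  have hdiv : (s : ℤ) / (j ! : ℤ) = 0 := Int.ediv_eq_zero_of_lt (by positivity) (by exact_mod_cast hs)
  simp [fDigit, hd, hmod, hdiv, Nat.div_eq_of_lt hs']

theorem lehmerDecode_append_replicate_zero (l₁ l₂ cs : List ℕ) :
    lehmerDecode (l₁ ++ l₂) (List.replicate l₁.length 0 ++ cs) = l₁ ++ lehmerDecode l₂ cs := by
  induction l₁ with
  | nil => rfl
  | cons a l ih => simp [List.replicate_succ, lehmerDecode, ih]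

theorem map_fDigit_reverse_range {n s k : ℕ} (hkn : k ≤ n) (hs : s < k !) :
    (List.range n).reverse.map (fDigit n s)
      = List.replicate (n - k) 0 ++ (List.range k).reverse.map (fDigit n s) := by
  obtain ⟨m, rfl⟩ := Nat.exists_eq_add_of_le hkn
  rw [List.range_add, List.reverse_append, List.map_append, Nat.add_sub_cancel_left]
  congr 1
  refine List.eq_replicate_iff.2 ⟨by simp, ?_⟩
  simp only [List.mem_map, List.mem_reverse, List.mem_range]
  rintro _ ⟨_, ⟨j, -, rfl⟩, rfl⟩
  exact fDigit_eq_zero_of_lt_factorial (hs.trans_le (factorial_le (le_add_right k j)))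

theorem range_isPrefix_permList {n s k : ℕ} (hkn : k ≤ n) (hs : s < k !) :
    List.range (n - k) <+: permList n s := by
  have hrange : List.range n = List.range (n - k) ++ (List.range k).map (n - k + ·) := by
    rw [← List.range_add, Nat.sub_add_cancel hkn]
  rw [permList, map_fDigit_reverse_range hkn hs, hrange]
  conv => enter [2, 2, 1]; rw [← List.length_range (n := n - k)]
  rw [lehmerDecode_append_replicate_zero]
  exact List.prefix_append _ _

namespace IsUnrankPerm

variable {n s k : ℕ} {σ : Equiv.Perm (Fin n)}

theorem apply_eq_self (hσ : IsUnrankPerm n s σ) (hkn : k ≤ n) (hs : s < k !) (i : Fin n)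
    (hi : (i : ℕ) < n - k) : σ i = i := by
  have hpre := range_isPrefix_permList hkn hs
  have hlen : (i : ℕ) < (permList n s).length := hi.trans_le (by simpa using hpre.length_le)
  ext
  rw [hσ i, List.getD_eq_getElem _ _ hlen, ← hpre.getElem (by simpa using hi), List.getElem_range]

theorem eq_one_of_seed_zero (hσ : IsUnrankPerm n 0 σ) : σ = 1 :=
  Equiv.ext fun i => hσ.apply_eq_self (zero_le n) (factorial_pos 0) i (by omega)

theorem card_support_le (hσ : IsUnrankPerm n s σ) (hkn : k ≤ n) (hs : s < k !) :
    #σ.support ≤ k := by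
  have hfixed : ({i : Fin n | (i : ℕ) < n - k} : Finset (Fin n)) ⊆ σ.supportᶜ := by
    intro i hi
    simp only [mem_filter, mem_univ, true_and] at hi
    simpa using hσ.apply_eq_self hkn hs i hi
  have hcard := card_le_card hfixed
  have hle_n : #σ.support ≤ n := σ.support.card_le_univ.trans_eq (Fintype.card_fin n)
  rw [Fin.card_filter_val_lt, card_compl, Fintype.card_fin] at hcard
  omega

end IsUnrankPerm

theorem unrank_dist_zero_le_general (n : ℕ) (k : ℕ) (hkn : k ≤ n)
    (s : ℕ) (hs : s < k.factorial)
    (σ σ₀ : Equiv.Perm (Fin n)) (hσ : IsUnrankPerm n s σ) (hσ₀ : IsUnrankPerm n 0 σ₀) :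
    transDist σ σ₀ ≤ k - 1 := by
  calc transDist σ σ₀ = transDist σ 1 := by rw [hσ₀.eq_one_of_seed_zero]
    _ ≤ #(1 * σ⁻¹).support - 1 := transDist_le_card_support_sub_one σ 1
    _ = #σ.support - 1 := by rw [one_mul, Equiv.Perm.support_inv]
    _ ≤ k - 1 := Nat.sub_le_sub_right (hσ.card_support_le hkn hs) 1

/-- For every `n ≥ 1`, every `k` with `1 ≤ k ≤ n`, and every seed `s`
with `s < k!`, the permutation `𝒫(s)` is at transposition distance at most `k − 1`
from `𝒫(0)`: `d(𝒫(s), 𝒫(0)) ≤ k − 1`. -/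
theorem unrank_dist_zero_le (n : ℕ) (hn : 1 ≤ n) (k : ℕ) (hk1 : 1 ≤ k) (hkn : k ≤ n)
    (s : ℕ) (hs : s < k.factorial)
    (σ σ₀ : Equiv.Perm (Fin n)) (hσ : IsUnrankPerm n s σ) (hσ₀ : IsUnrankPerm n 0 σ₀) :
    transDist σ σ₀ ≤ k - 1 :=
  unrank_dist_zero_le_general n k hkn s hs σ σ₀ hσ hσ₀
end
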